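/- arXiv:2309.02880 — 2 statements merged into one kernel-verified Lean document; each statement's English description precedes it below -/
import Mathlib

section
/- Let G be a torsion-free abelian group and let R be a G-graded commutative ring. Then every minimal prime ideal of R is a graded ideal; in particular, the nilradical of R is a graded ideal. -/
/-!
A torsion-free abelian group embeds into its divisible hull, a `ℚ`-vector space, and hence into
`Lex (ι →₀ ℚ)` for a basis indexed by a linearly ordered `ι`; pulling this order back makes `G` a
linearly ordered cancellative group. For such gradings the homogeneous core of a prime ideal is
again prime, so a minimal prime coincides with its homogeneous core, and the nilradical is the
radical of the homogeneous ideal `0`.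
-/

universe u

theorem IsAddTorsionFree.exists_injective_addMonoidHom_lex (G : Type u) [AddCommGroup G]
    [IsAddTorsionFree G] :
    ∃ (ι : Type u) (_ : LinearOrder ι) (f : G →+ Lex (ι →₀ ℚ)), Function.Injective f := by
  let B := Module.Basis.ofVectorSpace ℚ (DivisibleHull G)
  obtain ⟨_, -⟩ := exists_wellFoundedLT (Module.Basis.ofVectorSpaceIndex ℚ (DivisibleHull G))
  refine ⟨_, inferInstance, (toLexAddEquiv _).toAddMonoidHom.comp
    (B.repr.toAddMonoidHom.comp (DivisibleHull.coeAddMonoidHom G)), ?_⟩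
  exact (toLexAddEquiv _).injective.comp (B.repr.injective.comp DivisibleHull.coe_injective)

theorem IsAddTorsionFree.exists_linearOrder_isOrderedCancelAddMonoid (G : Type*)
    [AddCommGroup G] [IsAddTorsionFree G] :
    ∃ _ : LinearOrder G, IsOrderedCancelAddMonoid G := by
  obtain ⟨ι, _, f, hf⟩ := exists_injective_addMonoidHom_lex G
  let := LinearOrder.lift' f hf
  exact ⟨_, Function.Injective.isOrderedCancelAddMonoid f (map_add f) Iff.rfl⟩

section LinearOrderedGrading

variable {ι σ A : Type*} [CommRing A] [AddCommMonoid ι] [LinearOrder ι]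
  [IsOrderedCancelAddMonoid ι] [SetLike σ A] [AddSubmonoidClass σ A] {𝒜 : ι → σ} [GradedRing 𝒜]

theorem Ideal.IsHomogeneous.of_mem_minimalPrimes {P : Ideal A} (hP : P ∈ minimalPrimes A) :
    P.IsHomogeneous 𝒜 := by
  have hle := P.toIdeal_homogeneousCore_le 𝒜
  rw [le_antisymm (hP.2 ⟨hP.1.1.homogeneousCore, bot_le⟩ hle) hle]
  exact (P.homogeneousCore 𝒜).isHomogeneous

variable (𝒜) in
theorem Ideal.IsHomogeneous.nilradical : (nilradical A).IsHomogeneous 𝒜 :=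
  (Ideal.IsHomogeneous.bot 𝒜).radical

end LinearOrderedGrading

/-- Every minimal prime ideal of a `G`-graded commutative ring with `G` a torsion-free abelian
group is a graded ideal; in particular, the nilradical is a graded ideal. -/
theorem minimalPrimes_isHomogeneous_and_nilradical_isHomogeneous
    {G : Type*} [AddCommGroup G] [DecidableEq G]
    (hG : ∀ (n : ℕ) (x : G), n ≠ 0 → n • x = 0 → x = 0)
    {R : Type*} [CommRing R] (𝒜 : G → AddSubgroup R) [GradedRing 𝒜] :
    (∀ P ∈ minimalPrimes R, Ideal.IsHomogeneous 𝒜 P) ∧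
      Ideal.IsHomogeneous 𝒜 (nilradical R) := by
  have : IsAddTorsionFree G :=
    ⟨fun n hn a b hab => sub_eq_zero.mp (hG n _ hn (by rw [nsmul_sub, sub_eq_zero]; exact hab))⟩
  obtain ⟨_, _⟩ := IsAddTorsionFree.exists_linearOrder_isOrderedCancelAddMonoid G
  -- `GradedRing 𝒜` was elaborated with the given `DecidableEq G`; replace it by the order's.
  obtain rfl : ‹DecidableEq G› = LinearOrder.toDecidableEq := Subsingleton.elim _ _
  exact ⟨fun P hP => .of_mem_minimalPrimes hP, .nilradical 𝒜⟩
end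

section
/- Let G be a torsion-free abelian group and let R = ⊕_{n∈G} R_n be a G-graded commutative ring. Then every idempotent element of R is contained in the base subring R₀, where 0 is the identity element of G. -/
/-!
Sending `r` to `∑ₙ rₙ Xⁿ` is a ring homomorphism `R →+* R[G]` whose composite with the
augmentation `ε = lift R R G 1 : R[G] → R` is the identity, so it suffices to show that every
idempotent `x` of a group algebra `S[G]` is the constant `single 0 (ε x)`. A torsion-free abelian
group embeds in `ℚ ⊗ G` and hence has unique sums, so `(S ⧸ p)[G]` has no zero divisors for
every prime `p` and its only idempotents are `0` and `1`. Therefore all coefficients of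
`x - single 0 (ε x)` lie in every prime, this difference of idempotents is nilpotent, and so it
vanishes.
-/

open AddMonoidAlgebra DirectSum

instance IsAddTorsionFree.to_twoUniqueSums {G : Type*} [AddCommGroup G] [IsAddTorsionFree G] :
    TwoUniqueSums G := by
  let j : G →ₗ[ℤ] TensorProduct ℤ ℚ G := TensorProduct.mk ℤ ℚ G 1
  have : IsLocalizedModule (nonZeroDivisors ℤ) j :=
    (isLocalizedModule_iff_isBaseChange _ ℚ j).mpr (TensorProduct.isBaseChange ℤ G ℚ)
  have hj : Function.Injective j :=
    (IsLocalizedModule.injective_iff_isRegular _ j).mpr fun c =>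
      smul_right_injective G (nonZeroDivisors.coe_ne_zero c)
  exact TwoUniqueSums.of_injective_addHom j.toAddMonoidHom.toAddHom hj inferInstance

namespace AddMonoidAlgebra

variable {S G : Type*}

theorem isNilpotent_of_forall_isNilpotent_coeff [CommSemiring S] [AddCommMonoid G] {x : S[G]}
    (hx : ∀ m, IsNilpotent (x.coeff m)) : IsNilpotent x := by
  rw [← sum_coeff_single x]
  refine isNilpotent_sum fun m _ => ?_
  obtain ⟨n, hn⟩ := hx m
  exact ⟨n, by rw [single_pow, hn, single_zero]⟩

theorem lift_one_mapRingHom {T : Type*} [CommSemiring S] [CommSemiring T] [AddMonoid G]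
    (f : S →+* T) (x : S[G]) :
    lift T T G 1 (mapRingHom G f x) = f (lift S S G 1 x) := by
  induction x using AddMonoidAlgebra.induction with
  | zero => simp
  | single_add m b x _ _ ih => simp [ih]

theorem eq_single_zero_lift_one_of_isIdempotentElem_of_noZeroDivisors [CommRing S]
    [NoZeroDivisors S] [AddCommMonoid G] [UniqueSums G] {x : S[G]} (hx : IsIdempotentElem x) :
    x = single 0 (lift S S G 1 x) := by
  obtain rfl | rfl := IsIdempotentElem.iff_eq_zero_or_one.mp hx
  · simp
  · simp [AddMonoidAlgebra.one_def]

theorem eq_single_zero_lift_one_of_isIdempotentElem [CommRing S] [AddCommMonoid G] [UniqueSums G]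
    {x : S[G]} (hx : IsIdempotentElem x) : x = single 0 (lift S S G 1 x) := by
  have hc : IsIdempotentElem (single 0 (lift S S G 1 x) : S[G]) :=
    (hx.map (lift S S G 1)).map (singleZeroRingHom (M := G))
  refine eq_of_isNilpotent_sub_of_isIdempotentElem hx hc
    (isNilpotent_of_forall_isNilpotent_coeff fun m => nilpotent_iff_mem_prime.mpr fun p _ => ?_)
  have hp := eq_single_zero_lift_one_of_isIdempotentElem_of_noZeroDivisors
    (hx.map (mapRingHom G (Ideal.Quotient.mk p)))
  rw [lift_one_mapRingHom, ← mapRingHom_single] at hp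
  rw [← Ideal.Quotient.eq_zero_iff_mem, ← coeff_mapRingHom, map_sub, ← hp, sub_self]
  rfl

end AddMonoidAlgebra

namespace GradedRing

variable {ι R σ : Type*} [DecidableEq ι] [AddMonoid ι] [SetLike σ R]

section Semiring

variable [Semiring R] [AddSubmonoidClass σ R] (𝒜 : ι → σ) [GradedRing 𝒜]

noncomputable def toAddMonoidAlgebra : R →+* R[ι] :=
  (toSemiring (fun i => (singleAddHom i).comp (AddSubmonoidClass.subtype (𝒜 i)))
    (by simp [AddMonoidAlgebra.one_def]) (fun _ _ => by simp [single_mul_single])).comp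
    (decomposeRingEquiv 𝒜).toRingHom

theorem toAddMonoidAlgebra_coe {i : ι} (a : 𝒜 i) :
    toAddMonoidAlgebra 𝒜 a = single i (a : R) := by
  simp [toAddMonoidAlgebra, decomposeRingEquiv, decompose_coe]

theorem coeff_toAddMonoidAlgebra (r : R) (i : ι) :
    (toAddMonoidAlgebra 𝒜 r).coeff i = decompose 𝒜 r i := by
  induction r using Decomposition.inductionOn 𝒜 with
  | zero => simp
  | @homogeneous j a =>
    rw [toAddMonoidAlgebra_coe, coeff_single, decompose_coe]
    obtain rfl | hji := eq_or_ne j i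
    · simp
    · rw [Finsupp.single_eq_of_ne hji.symm, DirectSum.of_eq_of_ne _ _ _ hji.symm,
        ZeroMemClass.coe_zero]
  | add r s hr hs => simp [hr, hs]

theorem mem_of_toAddMonoidAlgebra_eq_single {r : R} {i : ι}
    (h : toAddMonoidAlgebra 𝒜 r = single i r) : r ∈ 𝒜 i := by
  have hr := congr(($h).coeff i)
  rw [coeff_toAddMonoidAlgebra, coeff_single, Finsupp.single_eq_same] at hr
  exact hr ▸ SetLike.coe_mem _

end Semiring

theorem lift_one_toAddMonoidAlgebra [CommSemiring R] [AddSubmonoidClass σ R] (𝒜 : ι → σ)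
    [GradedRing 𝒜] (r : R) : lift R R ι 1 (toAddMonoidAlgebra 𝒜 r) = r := by
  induction r using Decomposition.inductionOn 𝒜 with
  | zero => simp
  | homogeneous a => simp [toAddMonoidAlgebra_coe]
  | add r s hr hs => simp [hr, hs]

end GradedRing

/-- Every idempotent element of a `G`-graded commutative ring with `G` a torsion-free abelian
group is contained in the base subring `R₀`. -/
theorem idempotent_mem_degree_zero
    {G : Type*} [AddCommGroup G] [DecidableEq G]
    (hG : ∀ (n : ℕ) (x : G), n ≠ 0 → n • x = 0 → x = 0)
    {R : Type*} [CommRing R] (𝒜 : G → AddSubgroup R) [GradedRing 𝒜]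
    (e : R) (he : IsIdempotentElem e) :
    e ∈ 𝒜 0 := by
  have : IsAddTorsionFree G :=
    ⟨fun n hn a b hab => sub_eq_zero.mp (hG n _ hn (by rw [smul_sub, sub_eq_zero]; exact hab))⟩
  apply GradedRing.mem_of_toAddMonoidAlgebra_eq_single 𝒜
  simpa only [GradedRing.lift_one_toAddMonoidAlgebra] using
    eq_single_zero_lift_one_of_isIdempotentElem (he.map (GradedRing.toAddMonoidAlgebra 𝒜))
end
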